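/- For every h ≥ 0, there exists a picture in DC₁ whose matching graph contains a simple circuit of length 4 + 8h. -/

import Mathlib

/-- The alphabet Δ₁ = {a, b, c, d}. -/
inductive Del : Type
  | a | b | c | d
deriving DecidableEq

/-- Row cancellation: pairs [a,b] and [c,d]. -/
def rowStep (w w' : List Del) : Prop :=
  ∃ (u v : List Del),
    (w = u ++ [Del.a, Del.b] ++ v ∨ w = u ++ [Del.c, Del.d] ++ v) ∧ w' = u ++ v

/-- The row Dyck language D^Row. -/
def DRow (w : List Del) : Prop := Relation.ReflTransGen rowStep w []

/-- Column cancellation: pairs [a,c] and [b,d]. -/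
def colStep (w w' : List Del) : Prop :=
  ∃ (u v : List Del),
    (w = u ++ [Del.a, Del.c] ++ v ∨ w = u ++ [Del.b, Del.d] ++ v) ∧ w' = u ++ v

/-- The column Dyck language D^Col. -/
def DCol (w : List Del) : Prop := Relation.ReflTransGen colStep w []

/-- Row i (of length n) of a picture. -/
def row (p : ℕ → ℕ → Del) (n i : ℕ) : List Del := (List.range n).map (p i)

/-- Column j (of length m) of a picture. -/
def col (p : ℕ → ℕ → Del) (m j : ℕ) : List Del :=
  (List.range m).map (fun i => p i j)

/-- The Dyck crossword language DC₁: nonempty pictures all of whose rows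
are in D^Row and all of whose columns are in D^Col. -/
def DC (m n : ℕ) (p : ℕ → ℕ → Del) : Prop :=
  1 ≤ m ∧ 1 ≤ n ∧ (∀ i < m, DRow (row p n i)) ∧ (∀ j < n, DCol (col p m j))

/-- Positions `j < j'` match in a row word: the letters form a row matching
pair ([a,b] or [c,d]) and the factor strictly between them is in D^Row. -/
def rowMatchW (w : List Del) (j j' : ℕ) : Prop :=
  j < j' ∧ j' < w.length ∧
    ((w[j]? = some Del.a ∧ w[j']? = some Del.b) ∨
      (w[j]? = some Del.c ∧ w[j']? = some Del.d)) ∧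
    DRow ((w.drop (j + 1)).take (j' - (j + 1)))

/-- Positions `i < i'` match in a column word: the letters form a column
matching pair ([a,c] or [b,d]) and the factor strictly between them is in
D^Col. -/
def colMatchW (w : List Del) (i i' : ℕ) : Prop :=
  i < i' ∧ i' < w.length ∧
    ((w[i]? = some Del.a ∧ w[i']? = some Del.c) ∨
      (w[i]? = some Del.b ∧ w[i']? = some Del.d)) ∧
    DCol ((w.drop (i + 1)).take (i' - (i + 1)))

/-- Row edge of the matching graph of picture `p` (of size m×n) between cells
`u` and `v`: same row, matched positions (in either order). -/
def rowEdge (p : ℕ → ℕ → Del) (n : ℕ) (u v : ℕ × ℕ) : Prop :=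
  u.1 = v.1 ∧ (rowMatchW (row p n u.1) u.2 v.2 ∨ rowMatchW (row p n u.1) v.2 u.2)

/-- Column edge of the matching graph between cells `u` and `v`. -/
def colEdge (p : ℕ → ℕ → Del) (m : ℕ) (u v : ℕ × ℕ) : Prop :=
  u.2 = v.2 ∧ (colMatchW (col p m u.2) u.1 v.1 ∨ colMatchW (col p m u.2) v.1 u.1)

/-- Adjacency in the matching graph. -/
def adj (p : ℕ → ℕ → Del) (m n : ℕ) (u v : ℕ × ℕ) : Prop :=
  rowEdge p n u v ∨ colEdge p m u v

/-!
The picture has four rows and the `4h + 2` columns `acac, (bacd abdc acbd bdac)^h, bdbd`, each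
read from the top. Its rows are `ab (aabb)^h`, `c (abcd)^h d`, `(acdb)^h ab` and `(cd)^(2h+1)`, all
in D^Row, and its columns are all in D^Col. The circuit starts at the cell `(0, 0)`, visits eight
cells in each block of four columns, passing through rows 0, 3, 2, 3 and back to row 0, and closes
up through the last column and the long row-1 match between the `c` in column 0 and the `d` in
column `4h + 1`.
-/

open Del Relation List

theorem reflTransGen_nil_insert {α : Type*} {r : List α → List α → Prop}
    (hr : ∀ x y {w w'}, r w w' → r (x ++ w ++ y) (x ++ w' ++ y)) {u v w : List α}
    (huv : ReflTransGen r (u ++ v) []) (hw : ReflTransGen r w []) :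
    ReflTransGen r (u ++ w ++ v) [] :=
  (hw.lift (fun z => u ++ z ++ v) fun _ _ => hr u v).trans (by simpa using huv)

theorem flatten_replicate_eq_append {α : Type*} (w : List α) {s h : ℕ} (hs : s < h) :
    (replicate h w).flatten =
      (replicate s w).flatten ++ w ++ (replicate (h - s - 1) w).flatten := by
  obtain ⟨k, rfl⟩ : ∃ k, h = s + (k + 1) := ⟨h - s - 1, by omega⟩
  rw [show s + (k + 1) - s - 1 = k by omega, replicate_add, flatten_append, replicate_succ,
    flatten_cons, append_assoc]

theorem cons_flatten_replicate_of_cons_eq {α : Type*} {x : α} {w u : List α}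
    (hwu : x :: w = u ++ [x]) (h : ℕ) :
    x :: (replicate h w).flatten = (replicate h u).flatten ++ [x] := by
  induction h with
  | zero => rfl
  | succ h ih =>
    rw [replicate_succ, flatten_cons, replicate_succ, flatten_cons, ← cons_append, hwu,
      append_assoc, singleton_append, ih, append_assoc]

theorem getElem?_append_append_length_add {α : Type*} (u w v : List α) {j : ℕ}
    (hj : j < w.length) : (u ++ w ++ v)[u.length + j]? = w[j]? := by
  rw [append_assoc, getElem?_append_right (by omega), Nat.add_sub_cancel_left,
    getElem?_append_left hj]

theorem take_drop_append_append_length_add {α : Type*} (u w v : List α) {j k : ℕ}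
    (hjk : j + k ≤ w.length) :
    ((u ++ w ++ v).drop (u.length + j)).take k = (w.drop j).take k := by
  rw [append_assoc, drop_append, drop_eq_nil_of_le (by omega), nil_append,
    Nat.add_sub_cancel_left, drop_append_of_le_length (by omega),
    take_append_of_le_length (by simp; omega)]

theorem rowStep_append_append (x y : List Del) {w w' : List Del} (h : rowStep w w') :
    rowStep (x ++ w ++ y) (x ++ w' ++ y) := by
  obtain ⟨u, v, hw, rfl⟩ := h
  exact ⟨x ++ u, v ++ y, by rcases hw with rfl | rfl <;> simp, by simp⟩

namespace DRow

theorem insert {u v w : List Del} (huv : DRow (u ++ v)) (hw : DRow w) : DRow (u ++ w ++ v) :=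
  reflTransGen_nil_insert rowStep_append_append huv hw

theorem append {u v : List Del} (hu : DRow u) (hv : DRow v) : DRow (u ++ v) := by
  simpa using insert (v := []) (by simpa using hu) hv

theorem flatten_replicate {w : List Del} (hw : DRow w) (h : ℕ) :
    DRow (replicate h w).flatten := by
  induction h with
  | zero => exact .refl
  | succ h ih => exact hw.append ih

theorem ab : DRow [a, b] := .single ⟨[], [], .inl rfl, rfl⟩
theorem cd : DRow [c, d] := .single ⟨[], [], .inr rfl, rfl⟩

end DRow

theorem rowMatchW_cons_append {x y : Del} (hxy : (x = a ∧ y = b) ∨ (x = c ∧ y = d))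
    {w : List Del} (hw : DRow w) : rowMatchW (x :: (w ++ [y])) 0 (w.length + 1) := by
  refine ⟨by omega, by simp, ?_, by simpa using hw⟩
  rcases hxy with ⟨rfl, rfl⟩ | ⟨rfl, rfl⟩ <;> simp

theorem rowMatchW.append_append {w : List Del} {j j' : ℕ} (h : rowMatchW w j j')
    (u v : List Del) : rowMatchW (u ++ w ++ v) (u.length + j) (u.length + j') := by
  obtain ⟨hjj', hj', hxy, hw⟩ := h
  refine ⟨by omega, by simp; omega, ?_, ?_⟩
  · rwa [getElem?_append_append_length_add _ _ _ (by omega),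
      getElem?_append_append_length_add _ _ _ hj']
  · rw [show u.length + j' - (u.length + j + 1) = j' - (j + 1) by omega, add_assoc,
      take_drop_append_append_length_add _ _ _ (by omega)]
    exact hw

theorem rowMatchW.flatten_replicate {w : List Del} {j j' : ℕ} (hw : rowMatchW w j j')
    {s h : ℕ} (hs : s < h) (u v : List Del) :
    rowMatchW (u ++ (replicate h w).flatten ++ v)
      (u.length + w.length * s + j) (u.length + w.length * s + j') := by
  have := hw.append_append (u ++ (replicate s w).flatten) ((replicate (h - s - 1) w).flatten ++ v)
  rw [flatten_replicate_eq_append w hs]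
  simpa [mul_comm] using this

theorem colStep_append_append (x y : List Del) {w w' : List Del} (h : colStep w w') :
    colStep (x ++ w ++ y) (x ++ w' ++ y) := by
  obtain ⟨u, v, hw, rfl⟩ := h
  exact ⟨x ++ u, v ++ y, by rcases hw with rfl | rfl <;> simp, by simp⟩

namespace DCol

theorem insert {u v w : List Del} (huv : DCol (u ++ v)) (hw : DCol w) : DCol (u ++ w ++ v) :=
  reflTransGen_nil_insert colStep_append_append huv hw

theorem append {u v : List Del} (hu : DCol u) (hv : DCol v) : DCol (u ++ v) := by
  simpa using insert (v := []) (by simpa using hu) hv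

theorem ac : DCol [a, c] := .single ⟨[], [], .inl rfl, rfl⟩
theorem bd : DCol [b, d] := .single ⟨[], [], .inr rfl, rfl⟩

end DCol

def ofColumns (cs : List (List Del)) (i j : ℕ) : Del := (cs.getD j []).getD i a

theorem row_ofColumns (cs : List (List Del)) (i : ℕ) :
    row (ofColumns cs) cs.length i = cs.map (·.getD i a) := by
  apply ext_getElem (by simp [row])
  intro k _ hk
  simp only [length_map] at hk
  simp [row, ofColumns, getElem?_eq_getElem hk]

theorem col_ofColumns {cs : List (List Del)} {j : ℕ} {w : List Del} (hj : cs[j]? = some w) :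
    col (ofColumns cs) w.length j = w := by
  apply ext_getElem (by simp [col])
  intro k hk _
  simp_all [col, ofColumns, getD_eq_getElem?_getD]

theorem dc_ofColumns {cs : List (List Del)} {m : ℕ} (hm : 1 ≤ m) (hcs : cs ≠ [])
    (hcol : ∀ w ∈ cs, w.length = m ∧ DCol w)
    (hrow : ∀ i < m, DRow (row (ofColumns cs) cs.length i)) :
    DC m cs.length (ofColumns cs) := by
  refine ⟨hm, length_pos_iff.2 hcs, hrow, fun j hj => ?_⟩
  obtain ⟨hlen, hw⟩ := hcol _ (getElem_mem hj)
  rw [← hlen, col_ofColumns (getElem?_eq_getElem hj)]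
  exact hw

theorem adj_of_rowMatchW {p : ℕ → ℕ → Del} {m n i j j' : ℕ}
    (h : rowMatchW (row p n i) j j') :
    adj p m n (i, j) (i, j') :=
  .inl ⟨rfl, .inl h⟩

theorem adj_of_colMatchW {p : ℕ → ℕ → Del} {m n i i' j : ℕ}
    (h : colMatchW (col p m j) i i') :
    adj p m n (i, j) (i', j) :=
  .inr ⟨rfl, .inl h⟩

theorem adj.symm {p : ℕ → ℕ → Del} {m n : ℕ} {u v : ℕ × ℕ} (h : adj p m n u v) :
    adj p m n v u := by
  rcases h with ⟨he, h⟩ | ⟨he, h⟩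
  · exact .inl ⟨he.symm, by rw [← he]; exact h.symm⟩
  · exact .inr ⟨he.symm, by rw [← he]; exact h.symm⟩

theorem List.IsChain.getD_succ_mod {α : Type*} {R : α → α → Prop} {x : α} {l : List α}
    (hc : IsChain R (x :: l ++ [x])) (e : α) (k : ℕ) (hk : k < (x :: l).length) :
    R ((x :: l).getD k e) ((x :: l).getD ((k + 1) % (x :: l).length) e) := by
  have hR := isChain_iff_getElem.1 hc k (by simp at hk ⊢; omega)
  rw [getElem_append_left hk] at hR
  rw [getD_eq_getElem _ _ hk]
  rcases Nat.lt_or_ge (k + 1) (x :: l).length with hk' | hk'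
  · rwa [Nat.mod_eq_of_lt hk', getD_eq_getElem _ _ hk', ← getElem_append_left hk']
  · obtain rfl : k = l.length := by simp at hk hk'; omega
    simpa using hR

namespace CircuitPicture

def block : List (List Del) := [[b, a, c, d], [a, b, d, c], [a, c, b, d], [b, d, a, c]]

def columns (h : ℕ) : List (List Del) :=
  [a, c, a, c] :: (replicate h block).flatten ++ [[b, d, b, d]]

abbrev picture (h : ℕ) : ℕ → ℕ → Del := ofColumns (columns h)

theorem length_columns (h : ℕ) : (columns h).length = 4 * h + 2 := by
  simp [columns, block, mul_comm]

theorem row_picture (h i : ℕ) :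
    row (picture h) (4 * h + 2) i = [a, c, a, c].getD i a ::
      ((replicate h (block.map (·.getD i a))).flatten ++ [[b, d, b, d].getD i a]) := by
  rw [← length_columns, row_ofColumns]
  simp [columns, map_flatten, map_replicate]

theorem row_zero (h : ℕ) :
    row (picture h) (4 * h + 2) 0 = [a, b] ++ (replicate h [a, a, b, b]).flatten := by
  simp only [row_picture, block]
  simpa using (cons_flatten_replicate_of_cons_eq (by simp) h).symm

theorem row_one (h : ℕ) :
    row (picture h) (4 * h + 2) 1 = c :: ((replicate h [a, b, c, d]).flatten ++ [d]) := by
  simp [row_picture, block]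

theorem row_two (h : ℕ) :
    row (picture h) (4 * h + 2) 2 = (replicate h [a, c, d, b]).flatten ++ [a, b] := by
  simp only [row_picture, block, map_cons, map_nil, getD_cons_zero, getD_cons_succ]
  rw [← cons_append, cons_flatten_replicate_of_cons_eq (u := [a, c, d, b]) (by simp),
    append_assoc]
  rfl

theorem row_three (h : ℕ) :
    row (picture h) (4 * h + 2) 3 = (replicate h [c, d, c, d]).flatten ++ [c, d] := by
  simp only [row_picture, block, map_cons, map_nil, getD_cons_zero, getD_cons_succ]
  rw [← cons_append, cons_flatten_replicate_of_cons_eq (u := [c, d, c, d]) (by simp),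
    append_assoc]
  rfl

theorem getElem?_columns_block {h s r : ℕ} (hs : s < h) (hr : r < 4) :
    (columns h)[4 * s + 1 + r]? = block[r]? := by
  have hlen : ([a, c, a, c] :: (replicate s block).flatten).length = 4 * s + 1 := by
    simp [block, mul_comm]
  rw [columns, flatten_replicate_eq_append block hs, ← hlen]
  simpa using getElem?_append_append_length_add ([a, c, a, c] :: (replicate s block).flatten)
    block ((replicate (h - s - 1) block).flatten ++ [[b, d, b, d]]) (j := r) (by simpa [block])

theorem col_block {h s r j : ℕ} (hs : s < h) (hr : r < 4) (hj : j = 4 * s + 1 + r) {w : List Del}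
    (hw : block[r]? = some w) : col (picture h) 4 j = w := by
  subst hj
  have hlen : w.length = 4 := by
    interval_cases r <;> simp [block] at hw <;> simp [← hw]
  simpa [hlen] using col_ofColumns ((getElem?_columns_block hs hr).trans hw)

theorem col_zero (h : ℕ) : col (picture h) 4 0 = [a, c, a, c] :=
  col_ofColumns (w := [a, c, a, c]) rfl

theorem col_last (h : ℕ) : col (picture h) 4 (4 * h + 1) = [b, d, b, d] := by
  have hj : (columns h)[4 * h + 1]? = some [b, d, b, d] := by
    rw [columns, getElem?_append_right (by simp [block]; omega)]
    simp [block, mul_comm]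
  exact col_ofColumns hj

theorem colMatchW_four_mul {h s : ℕ} (hs : s < h) :
    colMatchW (col (picture h) 4 (4 * s)) 2 3 := by
  obtain ⟨x, y, hcol⟩ : ∃ x y, col (picture h) 4 (4 * s) = [x, y, a, c] := by
    rcases s with _ | t
    · exact ⟨a, c, col_zero h⟩
    · exact ⟨b, d, col_block (s := t) (r := 3) (by omega) (by omega) (by omega) rfl⟩
  rw [hcol]
  exact ⟨by simp, by simp, by simp, .refl⟩

theorem length_and_dCol_of_mem_columns {h : ℕ} {w : List Del} (hw : w ∈ columns h) :
    w.length = 4 ∧ DCol w := by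
  simp only [columns, block, cons_append, mem_cons, mem_append, mem_flatten, mem_replicate, ne_eq,
    ↓existsAndEq, and_true, not_mem_nil, or_false] at hw
  rcases hw with rfl | ⟨-, rfl | rfl | rfl | rfl⟩ | rfl
  exacts [⟨rfl, DCol.ac.append DCol.ac⟩,
    ⟨rfl, DCol.insert (u := [b]) (v := [d]) DCol.bd DCol.ac⟩,
    ⟨rfl, DCol.insert (u := [a]) (v := [c]) DCol.ac DCol.bd⟩, ⟨rfl, DCol.ac.append DCol.bd⟩,
    ⟨rfl, DCol.bd.append DCol.ac⟩, ⟨rfl, DCol.bd.append DCol.bd⟩]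

theorem dc_picture (h : ℕ) : DC 4 (4 * h + 2) (picture h) := by
  rw [← length_columns]
  refine dc_ofColumns (by norm_num) (by simp [columns]) (fun _ => length_and_dCol_of_mem_columns)
    (fun i hi => ?_)
  rw [length_columns]
  interval_cases i
  · rw [row_zero]
    exact DRow.ab.append ((DRow.insert (u := [a]) (v := [b]) DRow.ab DRow.ab).flatten_replicate h)
  · rw [row_one]
    exact DRow.insert (u := [c]) (v := [d]) DRow.cd ((DRow.ab.append DRow.cd).flatten_replicate h)
  · rw [row_two]
    exact ((DRow.insert (u := [a]) (v := [b]) DRow.ab DRow.cd).flatten_replicate h).append DRow.ab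
  · rw [row_three]
    exact ((DRow.cd.append DRow.cd).flatten_replicate h).append DRow.cd

def segment (s : ℕ) : List (ℕ × ℕ) :=
  [(0, 4 * s + 1), (3, 4 * s + 1), (3, 4 * s), (2, 4 * s), (2, 4 * s + 3), (3, 4 * s + 3),
    (3, 4 * s + 2), (0, 4 * s + 2)]

def circuit (h : ℕ) : List (ℕ × ℕ) :=
  (0, 0) :: ((range h).flatMap segment ++ [(0, 4 * h + 1), (1, 4 * h + 1), (1, 0)])

theorem length_circuit (h : ℕ) : (circuit h).length = 4 + 8 * h := by
  simp [circuit, segment]; ring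

theorem nodup_circuit (h : ℕ) : (circuit h).Nodup := by
  rw [circuit, nodup_cons, nodup_append, nodup_flatMap]
  refine ⟨by simp [segment], ⟨⟨fun s _ => by simp [segment],
    pairwise_lt_range.imp fun {s t} hst => ?_⟩, by simp, ?_⟩⟩
  · simp [Function.onFun, segment, disjoint_left]; omega
  · simp [segment]; omega

theorem isChain_segment {h s : ℕ} (hs : s < h) :
    List.IsChain (adj (picture h) 4 (4 * h + 2)) (segment s ++ [(0, 4 * s + 5)]) := by
  have hr0 : rowMatchW (row (picture h) (4 * h + 2) 0) (4 * s + 2) (4 * s + 5) := by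
    have hw : rowMatchW [a, a, b, b] 0 3 := ⟨by decide, by decide, by decide, DRow.ab⟩
    rw [row_zero]
    convert hw.flatten_replicate hs [a, b] [] using 1 <;> simp <;> omega
  have hr2 : rowMatchW (row (picture h) (4 * h + 2) 2) (4 * s) (4 * s + 3) := by
    have hw : rowMatchW [a, c, d, b] 0 3 := ⟨by decide, by decide, by decide, DRow.cd⟩
    rw [row_two]
    simpa using hw.flatten_replicate hs [] [a, b]
  have hr3 : rowMatchW (row (picture h) (4 * h + 2) 3) (4 * s) (4 * s + 1) := by
    have hw : rowMatchW [c, d, c, d] 0 1 := ⟨by decide, by decide, by decide, .refl⟩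
    rw [row_three]
    simpa using hw.flatten_replicate hs [] [c, d]
  have hr3' : rowMatchW (row (picture h) (4 * h + 2) 3) (4 * s + 2) (4 * s + 3) := by
    have hw : rowMatchW [c, d, c, d] 2 3 := ⟨by decide, by decide, by decide, .refl⟩
    rw [row_three]
    simpa using hw.flatten_replicate hs [] [c, d]
  have hc1 : colMatchW (col (picture h) 4 (4 * s + 1)) 0 3 := by
    rw [col_block (r := 0) hs (by norm_num) rfl rfl]
    exact ⟨by decide, by decide, by decide, DCol.ac⟩
  have hc2 : colMatchW (col (picture h) 4 (4 * s + 2)) 0 3 := by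
    rw [col_block (r := 1) hs (by norm_num) rfl rfl]
    exact ⟨by decide, by decide, by decide, DCol.bd⟩
  have hc3 : colMatchW (col (picture h) 4 (4 * s + 3)) 2 3 := by
    rw [col_block (r := 2) hs (by norm_num) rfl rfl]
    exact ⟨by decide, by decide, by decide, .refl⟩
  simp only [segment, cons_append, nil_append, isChain_cons_cons, isChain_singleton, and_true]
  exact ⟨adj_of_colMatchW hc1, (adj_of_rowMatchW hr3).symm,
    (adj_of_colMatchW (colMatchW_four_mul hs)).symm, adj_of_rowMatchW hr2, adj_of_colMatchW hc3,
    (adj_of_rowMatchW hr3').symm, (adj_of_colMatchW hc2).symm, adj_of_rowMatchW hr0⟩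

theorem isChain_walk {h k : ℕ} (hk : k ≤ h) :
    List.IsChain (adj (picture h) 4 (4 * h + 2))
      ((0, 0) :: (range k).flatMap segment ++ [(0, 4 * k + 1)]) := by
  induction k with
  | zero =>
    have hw : rowMatchW [a, b] 0 1 := ⟨by decide, by decide, by decide, .refl⟩
    have hr : rowMatchW (row (picture h) (4 * h + 2) 0) 0 1 := by
      rw [row_zero]
      simpa using hw.append_append [] (replicate h [a, a, b, b]).flatten
    simpa using adj_of_rowMatchW hr
  | succ k ih =>
    have := (ih (by omega)).append_overlap (isChain_segment (s := k) (by omega)) (by simp)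
    convert this using 1
    simp [range_succ, segment]; ring

theorem isChain_circuit (h : ℕ) :
    List.IsChain (adj (picture h) 4 (4 * h + 2)) (circuit h ++ [(0, 0)]) := by
  have hr : rowMatchW (row (picture h) (4 * h + 2) 1) 0 (4 * h + 1) := by
    rw [row_one]
    simpa [mul_comm] using
      rowMatchW_cons_append (.inr ⟨rfl, rfl⟩) ((DRow.ab.append DRow.cd).flatten_replicate h)
  have hc : colMatchW (col (picture h) 4 (4 * h + 1)) 0 1 := by
    rw [col_last]
    exact ⟨by decide, by decide, by decide, .refl⟩
  have hc0 : colMatchW (col (picture h) 4 0) 0 1 := by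
    rw [col_zero]
    exact ⟨by decide, by decide, by decide, .refl⟩
  have hclose : List.IsChain (adj (picture h) 4 (4 * h + 2))
      [(0, 4 * h + 1), (1, 4 * h + 1), (1, 0), (0, 0)] := by
    simp only [isChain_cons_cons, isChain_singleton, and_true]
    exact ⟨adj_of_colMatchW hc, (adj_of_rowMatchW hr).symm, (adj_of_colMatchW hc0).symm⟩
  have := (isChain_walk le_rfl).append_overlap (l₃ := [(1, 4 * h + 1), (1, 0), (0, 0)]) hclose
    (by simp)
  simpa [circuit] using this

end CircuitPicture

/-- For every h ≥ 0 there is a DC₁ picture whose matching graph contains a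
simple circuit of length 4 + 8h. -/
theorem exists_circuit_of_length (h : ℕ) :
    ∃ (m n : ℕ) (p : ℕ → ℕ → Del) (L : List (ℕ × ℕ)),
      DC m n p ∧ L.Nodup ∧ L.length = 4 + 8 * h ∧
      ∀ k < L.length,
        adj p m n (L.getD k (0, 0)) (L.getD ((k + 1) % L.length) (0, 0)) :=
  ⟨4, 4 * h + 2, CircuitPicture.picture h, CircuitPicture.circuit h, CircuitPicture.dc_picture h,
    CircuitPicture.nodup_circuit h, CircuitPicture.length_circuit h,
    (CircuitPicture.isChain_circuit h).getD_succ_mod (0, 0)⟩
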